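/- Let Y be a conformal Killing-Yano tensor of order p with associated tensor h on an n-dimensional pseudo-Riemannian manifold, and set h'_{a b₂…b_p} = ∇_a h_{b₂…b_p}. Then h' is totally trace-free: g^{ab₂} h'_{a b₂ b₃…b_p} = 0. -/

import Mathlib

open Finset

/-- The sign of a permutation, as a real number. -/
noncomputable def esign {p : ℕ} (σ : Equiv.Perm (Fin p)) : ℝ :=
  ((Equiv.Perm.sign σ : ℤ) : ℝ)

/-- A rank-`p` tensor (in components) is totally antisymmetric. -/
def IsAlt {ι : Type*} {p : ℕ} (T : (Fin p → ι) → ℝ) : Prop :=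
  ∀ (σ : Equiv.Perm (Fin p)) (v : Fin p → ι), T (v ∘ σ) = esign σ * T v

/-- Antisymmetrization of a rank-`p` tensor (with the `1/p!` factor). -/
noncomputable def alt {ι : Type*} {p : ℕ} (T : (Fin p → ι) → ℝ) : (Fin p → ι) → ℝ :=
  fun v => (Nat.factorial p : ℝ)⁻¹ * ∑ σ : Equiv.Perm (Fin p), esign σ * T (v ∘ σ)

/-- The tensor `g_{a[b₁} h_{b₂…b_{q+1}]}` :
antisymmetrization over the last `q+1` indices of `g_{a b₁} h_{b₂…b_{q+1}}`. -/
noncomputable def ghAlt {ι : Type*} {q : ℕ} (g : ι → ι → ℝ) (h : (Fin q → ι) → ℝ)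
    (a : ι) : (Fin (q + 1) → ι) → ℝ :=
  alt fun v => g a (v 0) * h fun i => v i.succ

/-- View a "derivative" `D : ι → ((Fin p → ι) → ℝ)` as a rank-`(p+1)` tensor. -/
def totalD {ι : Type*} {p : ℕ} (D : ι → (Fin p → ι) → ℝ) : (Fin (p + 1) → ι) → ℝ :=
  fun w => D (w 0) fun i => w i.succ

/-! Tracing the differentiated CKY equation `∇_a ∇_b Y_{c…} = ∇_a ∇_{[b} Y_{c…]} + 2 g_{b[c} ∇_a h_{…]}`
over `b, c` kills the totally antisymmetric part and leaves `2 (n - p + 1) / p · ∇_a h`, a nonzero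
multiple since `p < n + 1`. A second trace over `a` and the next slot of `Y` gives a double trace
of `∇∇Y` which changes sign when the two (derivative, slot) pairs are exchanged, so it is half the
double trace of the curvature term of the Ricci identity. That term vanishes slot by slot: in the
two traced slots a symmetric Ricci tensor meets a 2-form, in every other slot the first Bianchi
identity meets a 3-form. -/

lemma esign_mul {p : ℕ} (σ τ : Equiv.Perm (Fin p)) : esign (σ * τ) = esign σ * esign τ := by
  simp [esign]

lemma esign_inv {p : ℕ} (σ : Equiv.Perm (Fin p)) : esign σ⁻¹ = esign σ := by
  simp [esign]

lemma esign_mul_self {p : ℕ} (σ : Equiv.Perm (Fin p)) : esign σ * esign σ = 1 := by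
  rw [esign, ← Int.cast_mul, ← Units.val_mul, Int.units_mul_self, Units.val_one, Int.cast_one]

lemma esign_swap {p : ℕ} {i j : Fin p} (hij : i ≠ j) : esign (Equiv.swap i j) = -1 := by
  simp [esign, Equiv.Perm.sign_swap hij]

lemma esign_decomposeFin_symm {q : ℕ} (k : Fin (q + 1)) (e : Equiv.Perm (Fin q)) :
    esign (Equiv.Perm.decomposeFin.symm (k, e)) = esign (Equiv.swap 0 k) * esign e := by
  rcases eq_or_ne k 0 with rfl | hk
  · simp [esign, Equiv.Perm.decomposeFin.symm_sign]
  · rw [esign_swap hk.symm]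
    simp [esign, Equiv.Perm.decomposeFin.symm_sign, hk]

section Alternating

variable {ι : Type*}

lemma alt_isAlt {p : ℕ} (T : (Fin p → ι) → ℝ) : IsAlt (alt T) := by
  intro σ v
  unfold alt
  rw [← Equiv.sum_comp (Equiv.mulLeft σ⁻¹), Finset.mul_sum, Finset.mul_sum, Finset.mul_sum]
  refine Finset.sum_congr rfl fun τ _ => ?_
  have hcomp : (v ∘ σ) ∘ ⇑(σ⁻¹ * τ) = v ∘ τ := by
    ext; simp
  rw [Equiv.coe_mulLeft, hcomp, esign_mul, esign_inv]
  ring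

namespace IsAlt

variable {p : ℕ} {T U : (Fin p → ι) → ℝ}

lemma add (hT : IsAlt T) (hU : IsAlt U) : IsAlt fun v => T v + U v := by
  intro σ v
  simp only [hT σ v, hU σ v]
  ring

lemma const_mul (hT : IsAlt T) (c : ℝ) : IsAlt fun v => c * T v := by
  intro σ v
  simp only [hT σ v]
  ring

lemma apply_comp_swap (hT : IsAlt T) {i j : Fin p} (hij : i ≠ j) (v : Fin p → ι) :
    T (v ∘ Equiv.swap i j) = -T v := by
  rw [hT, esign_swap hij, neg_one_mul]

lemma cons {T : (Fin (p + 1) → ι) → ℝ} (hT : IsAlt T) (b : ι) :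
    IsAlt fun v : Fin p → ι => T (Fin.cons b v) := by
  intro σ v
  have hcomp : (Fin.cons b (v ∘ σ) : Fin (p + 1) → ι) =
      Fin.cons b v ∘ Equiv.Perm.decomposeFin.symm (0, σ) := by
    ext i
    cases i using Fin.cases <;>
      simp [Equiv.Perm.decomposeFin_symm_apply_zero, Equiv.Perm.decomposeFin_symm_apply_succ]
  show T _ = esign σ * T _
  rw [hcomp, hT, esign_decomposeFin_symm, Equiv.swap_self]
  simp [esign]

lemma apply_cons_cons {T : (Fin (p + 2) → ι) → ℝ} (hT : IsAlt T) (x y : ι) (w : Fin p → ι) :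
    T (Fin.cons x (Fin.cons y w)) = -T (Fin.cons y (Fin.cons x w)) := by
  have hcomp : (Fin.cons y (Fin.cons x w) : Fin (p + 2) → ι) ∘ Equiv.swap 0 1 =
      Fin.cons x (Fin.cons y w) := by
    rw [Equiv.comp_swap_eq_update, ← Fin.succ_zero_eq_one]
    simp only [Fin.cons_zero, Fin.cons_succ, ← Fin.cons_update, Fin.update_cons_zero]
  rw [← hcomp, hT.apply_comp_swap (by simp)]

lemma apply_cons_update {T : (Fin (p + 1) → ι) → ℝ} (hT : IsAlt T) (y f : ι) (w : Fin p → ι)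
    (j : Fin p) :
    T (Fin.cons f (Function.update w j y)) = -T (Fin.cons y (Function.update w j f)) := by
  have hcomp : (Fin.cons y (Function.update w j f) : Fin (p + 1) → ι) ∘ Equiv.swap 0 j.succ =
      Fin.cons f (Function.update w j y) := by
    simp only [Equiv.comp_swap_eq_update, Fin.cons_zero, Fin.cons_succ, Function.update_self,
      ← Fin.cons_update, Function.update_idem, Fin.update_cons_zero]
  rw [← hcomp, hT.apply_comp_swap (Fin.succ_ne_zero j).symm]

end IsAlt

/-- Group the permutations `σ` by `k = σ 0`: as `F` is alternating, the `q!` permutations in each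
group contribute the same term, and `q! / (q+1)! = 1 / (q+1)`. -/
lemma alt_mul_tail {q : ℕ} (A : ι → ℝ) {F : (Fin q → ι) → ℝ} (hF : IsAlt F)
    (v : Fin (q + 1) → ι) :
    alt (fun u => A (u 0) * F fun i => u i.succ) v =
      ((q : ℝ) + 1)⁻¹ * ∑ k, esign (Equiv.swap 0 k) *
        (A (v k) * F fun i => v (Equiv.swap 0 k i.succ)) := by
  unfold alt
  rw [← Equiv.sum_comp Equiv.Perm.decomposeFin.symm, Fintype.sum_prod_type]
  have hterm : ∀ k e, esign (Equiv.Perm.decomposeFin.symm (k, e)) *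
      (A ((v ∘ Equiv.Perm.decomposeFin.symm (k, e)) 0) *
        F fun i => (v ∘ Equiv.Perm.decomposeFin.symm (k, e)) i.succ) =
      esign (Equiv.swap 0 k) * (A (v k) * F fun i => v (Equiv.swap 0 k i.succ)) := by
    intro k e
    have hcomp : (fun i => (v ∘ Equiv.Perm.decomposeFin.symm (k, e)) i.succ) =
        (fun i => v (Equiv.swap 0 k i.succ)) ∘ e := by
      ext i; simp [Equiv.Perm.decomposeFin_symm_apply_succ]
    rw [hcomp, hF, esign_decomposeFin_symm, Function.comp_apply,
      Equiv.Perm.decomposeFin_symm_apply_zero]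
    linear_combination (esign (Equiv.swap 0 k) * (A (v k) * F fun i => v (Equiv.swap 0 k i.succ)))
      * esign_mul_self e
  simp only [hterm, Finset.sum_const, Finset.card_univ, Fintype.card_perm, Fintype.card_fin,
    nsmul_eq_mul, ← Finset.mul_sum]
  rw [Nat.factorial_succ]
  push_cast
  field_simp

end Alternating

section Contraction

variable {ι : Type*} [Fintype ι]

def contract (G T : ι → ι → ℝ) : ℝ :=
  ∑ a, ∑ b, G a b * T a b

lemma contract_add (G T U : ι → ι → ℝ) :
    contract G (fun a b => T a b + U a b) = contract G T + contract G U := by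
  simp only [contract, mul_add, Finset.sum_add_distrib]

lemma contract_const_mul (G T : ι → ι → ℝ) (c : ℝ) :
    contract G (fun a b => c * T a b) = c * contract G T := by
  simp only [contract, Finset.mul_sum, mul_left_comm]

lemma contract_mul_const (G T : ι → ι → ℝ) (c : ℝ) :
    contract G (fun a b => T a b * c) = contract G T * c := by
  simp only [contract, Finset.sum_mul, mul_assoc]

lemma contract_sum {κ : Type*} (s : Finset κ) (G : ι → ι → ℝ) (T : κ → ι → ι → ℝ) :
    contract G (fun a b => ∑ k ∈ s, T k a b) = ∑ k ∈ s, contract G (T k) := by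
  simp only [contract, Finset.mul_sum]
  exact Finset.sum_comm_cycle

lemma contract_comm (G H : ι → ι → ℝ) (F : ι → ι → ι → ι → ℝ) :
    contract G (fun a y => contract H fun b x => F a y b x) =
      contract H (fun b x => contract G fun a y => F a y b x) := by
  simp only [contract, Finset.mul_sum]
  rw [Finset.sum_comm_cycle]
  refine Finset.sum_congr rfl fun _ _ => ?_
  rw [Finset.sum_comm_cycle]
  simp only [mul_left_comm]

lemma contract_cycle (G : ι → ι → ℝ) (F : ι → ι → ι → ι → ι → ι → ℝ) :
    contract G (fun a y => contract G fun b x => contract G fun e f => F a y b x e f) =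
      contract G (fun a y => contract G fun b x => contract G fun e f => F b x e f a y) := by
  conv_lhs => enter [2, a, y]; rw [contract_comm]
  exact contract_comm G G _

lemma two_mul_contract_contract (G : ι → ι → ℝ) (F : ι → ι → ι → ι → ℝ) :
    2 * contract G (fun a y => contract G fun b x => F a y b x) =
      contract G (fun a y => contract G fun b x => F a y b x + F b x a y) := by
  simp only [contract_add]
  rw [two_mul]
  congr 1
  exact contract_comm G G F

variable {G : ι → ι → ℝ}

lemma contract_flip (hG : ∀ a b, G a b = G b a) (T : ι → ι → ℝ) :
    contract G (fun a b => T b a) = contract G T := by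
  simp only [contract]
  rw [Finset.sum_comm]
  simp only [hG]

lemma contract_eq_zero_of_antisymm (hG : ∀ a b, G a b = G b a) {T : ι → ι → ℝ}
    (hT : ∀ a b, T b a = -T a b) : contract G T = 0 := by
  have h := contract_flip hG T
  rw [show (fun a b => T b a) = fun a b => -1 * T a b from by
    ext a b; rw [hT]; ring, contract_const_mul] at h
  linarith

lemma contract_contract_eq_zero_of_antisymm {F : ι → ι → ι → ι → ℝ}
    (hF : ∀ a y b x, F b x a y = -F a y b x) :
    contract G (fun a y => contract G fun b x => F a y b x) = 0 := by
  have hzero : ∀ a y b x, F a y b x + F b x a y = 0 := fun a y b x => by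
    rw [hF]; ring
  have h := two_mul_contract_contract G F
  simp only [hzero] at h
  simpa [contract] using h

end Contraction

section Metric

variable {ι : Type*} [Fintype ι] [DecidableEq ι] {g ginv : ι → ι → ℝ}

lemma contract_metric (hgsymm : ∀ a b, g a b = g b a)
    (hinv : ∀ a b, ∑ c, ginv a c * g c b = if a = b then (1 : ℝ) else 0) :
    contract ginv g = Fintype.card ι := by
  calc contract ginv g = ∑ a, ∑ c, ginv a c * g c a :=
        Finset.sum_congr rfl fun a _ => Finset.sum_congr rfl fun c _ => by rw [hgsymm]
    _ = Fintype.card ι := by simp [hinv]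

lemma contract_metric_mul (hginvsymm : ∀ a b, ginv a b = ginv b a)
    (hinv : ∀ a b, ∑ c, ginv a c * g c b = if a = b then (1 : ℝ) else 0) (c : ι) (T : ι → ℝ) :
    contract ginv (fun b x => g b c * T x) = T c := by
  simp only [contract]
  rw [Finset.sum_comm]
  simp_rw [← mul_assoc, ← Finset.sum_mul, hginvsymm _ _, hinv]
  simp

lemma contract_ghAlt (hgsymm : ∀ a b, g a b = g b a) (hginvsymm : ∀ a b, ginv a b = ginv b a)
    (hinv : ∀ a b, ∑ c, ginv a c * g c b = if a = b then (1 : ℝ) else 0)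
    {q : ℕ} {F : (Fin q → ι) → ℝ} (hF : IsAlt F) (w : Fin q → ι) :
    contract ginv (fun b x => ghAlt g F b (Fin.cons x w)) =
      ((Fintype.card ι : ℝ) - q) / (q + 1) * F w := by
  simp only [ghAlt, alt_mul_tail _ hF, contract_const_mul]
  -- after contracting, the `k = j+1` term is evaluated at `x = w j`, where the swap exchanges
  -- two equal entries
  have hfix : ∀ j : Fin q,
      (fun i => (Fin.cons (w j) w : Fin (q + 1) → ι) (Equiv.swap 0 j.succ i.succ)) = w := by
    intro j
    ext i
    by_cases h : i = j <;> simp [Equiv.swap_apply_def, h]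
  rw [contract_sum, Fin.sum_univ_succ]
  simp only [contract_const_mul, Equiv.swap_self, esign_swap (Fin.succ_ne_zero _).symm,
    Fin.cons_zero, Fin.cons_succ, contract_metric_mul hginvsymm hinv, hfix]
  simp only [esign, Equiv.Perm.sign_refl, Units.val_one, Int.cast_one, Equiv.refl_apply,
    Fin.cons_succ, contract_mul_const, contract_metric hgsymm hinv, one_mul, neg_mul,
    sum_neg_distrib, sum_const, card_univ, Fintype.card_fin, nsmul_eq_mul]
  field_simp
  ring

lemma contract_of_cky_eq (hgsymm : ∀ a b, g a b = g b a) (hginvsymm : ∀ a b, ginv a b = ginv b a)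
    (hinv : ∀ a b, ∑ c, ginv a c * g c b = if a = b then (1 : ℝ) else 0)
    {q : ℕ} {T : ι → (Fin (q + 1) → ι) → ℝ} {S : (Fin (q + 2) → ι) → ℝ}
    {F : (Fin q → ι) → ℝ} (hF : IsAlt F)
    (hT : ∀ b v, T b v = alt S (Fin.cons b v) + 2 * ghAlt g F b v) (w : Fin q → ι) :
    contract ginv (fun b x => T b (Fin.cons x w)) =
      2 * (((Fintype.card ι : ℝ) - q) / (q + 1) * F w) := by
  simp only [hT]
  rw [contract_add, contract_const_mul, contract_ghAlt hgsymm hginvsymm hinv hF,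
    contract_eq_zero_of_antisymm hginvsymm fun b x => (alt_isAlt S).apply_cons_cons x b w,
    zero_add]

end Metric

section Curvature

variable {ι : Type*} [Fintype ι] {G : ι → ι → ℝ} {R : ι → ι → ι → ι → ℝ}

def ricci (G : ι → ι → ℝ) (R : ι → ι → ι → ι → ℝ) (b e : ι) : ℝ :=
  contract G fun a y => R a b y e

lemma ricci_symm (hG : ∀ a b, G a b = G b a) (hpair : ∀ a b c d, R a b c d = R c d a b)
    (b e : ι) : ricci G R b e = ricci G R e b := by
  rw [ricci, ← contract_flip hG]
  congr 1
  ext a y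
  exact hpair y b a e

lemma contract_riemann_first_slot (hG : ∀ a b, G a b = G b a)
    (hpair : ∀ a b c d, R a b c d = R c d a b) (hasym₁ : ∀ a b c d, R a b c d = -R b a c d)
    {Z : ι → ι → ℝ} (hZ : ∀ x y, Z y x = -Z x y) :
    contract G (fun a y => contract G fun b x => contract G fun e f => R a b x e * Z f y) = 0 := by
  have hM : ∀ a e, contract G (fun b x => R a b x e) = -ricci G R a e := by
    intro a e
    rw [ricci, ← neg_one_mul, ← contract_const_mul]
    congr 1
    ext b x
    rw [hasym₁]
    ring
  calc _ = contract G (fun a y => contract G fun e f => -ricci G R a e * Z f y) := by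
        congr 1; ext a y
        rw [contract_comm]
        congr 1; ext e f
        rw [contract_mul_const, hM]
    _ = 0 := contract_contract_eq_zero_of_antisymm fun a y e f => by
        rw [ricci_symm hG hpair e a, hZ]; ring

lemma contract_riemann_second_slot (hG : ∀ a b, G a b = G b a)
    (hpair : ∀ a b c d, R a b c d = R c d a b) {Z : ι → ι → ℝ} (hZ : ∀ x y, Z y x = -Z x y) :
    contract G (fun a y => contract G fun b x => contract G fun e f => R a b y e * Z x f) = 0 := by
  calc _ = contract G (fun b x => contract G fun e f => ricci G R b e * Z x f) := by
        rw [contract_comm]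
        congr 1; ext b x
        rw [contract_comm]
        congr 1; ext e f
        rw [contract_mul_const, ricci]
    _ = 0 := contract_contract_eq_zero_of_antisymm fun b x e f => by
        rw [ricci_symm hG hpair e b, hZ]; ring

/-- The cyclic relabelling of the three contracted pairs turns the sum into a third of its
cyclic symmetrisation in the first, second and fourth index of `R`, which vanishes by Bianchi. -/
lemma contract_riemann_bianchi (hasym₂ : ∀ a b c d, R a b c d = -R a b d c)
    (hbianchi : ∀ a b c d, R a b c d + R b c a d + R c a b d = 0) (c : ι)
    {Z : ι → ι → ι → ℝ} (hZ₀₁ : ∀ x y f, Z y x f = -Z x y f)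
    (hZ₁₂ : ∀ x y f, Z x f y = -Z x y f) :
    contract G (fun a y => contract G fun b x => contract G fun e f => R a b c e * Z x y f) =
      0 := by
  have hcyc₁ := contract_cycle G fun a y b x e f => R a b c e * Z x y f
  have hcyc₂ := contract_cycle G fun a y b x e f => R b e c a * Z f x y
  have hsum : ∀ a y b x e f,
      R a b c e * Z x y f + R b e c a * Z f x y + R e a c b * Z y f x = 0 := by
    intro a y b x e f
    have hfxy : Z f x y = Z x y f := by rw [hZ₀₁ x f y, hZ₁₂, neg_neg]
    have hyfx : Z y f x = Z x y f := by rw [hZ₁₂ y x f, hZ₀₁, neg_neg]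
    rw [hfxy, hyfx, hasym₂ a b, hasym₂ b e, hasym₂ e a]
    linear_combination (-Z x y f) * hbianchi a b e c
  have hzero : contract G (fun a y => contract G fun b x => contract G fun e f =>
      R a b c e * Z x y f + R b e c a * Z f x y + R e a c b * Z y f x) = 0 := by
    simp only [hsum]
    simp [contract]
  simp only [contract_add] at hzero
  linarith

lemma contract_contract_curvature_eq_zero (hG : ∀ a b, G a b = G b a)
    (hpair : ∀ a b c d, R a b c d = R c d a b) (hasym₁ : ∀ a b c d, R a b c d = -R b a c d)
    (hasym₂ : ∀ a b c d, R a b c d = -R a b d c)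
    (hbianchi : ∀ a b c d, R a b c d + R b c a d + R c a b d = 0)
    {m : ℕ} {Y : (Fin (m + 2) → ι) → ℝ} (hY : IsAlt Y) (v : Fin m → ι) :
    contract G (fun a y => contract G fun b x =>
      ∑ i, ∑ e, ∑ f, R a b ((Fin.cons x (Fin.cons y v) : Fin (m + 2) → ι) i) e * G e f *
        Y (Function.update (Fin.cons x (Fin.cons y v)) i f)) = 0 := by
  have hsum : ∀ (A B : ι → ℝ), ∑ e, ∑ f, A e * G e f * B f = contract G fun e f => A e * B f :=
    fun A B => by simp only [contract, mul_comm, mul_left_comm]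
  simp only [hsum, Fin.sum_univ_succ, Fin.cons_zero, Fin.cons_succ, Fin.update_cons_zero,
    ← Fin.cons_update, contract_add, contract_sum]
  have hZ : ∀ x y, Y (Fin.cons y (Fin.cons x v)) = -Y (Fin.cons x (Fin.cons y v)) :=
    fun x y => hY.apply_cons_cons y x v
  rw [contract_riemann_first_slot hG hpair hasym₁ hZ, contract_riemann_second_slot hG hpair hZ,
    zero_add, zero_add]
  refine Finset.sum_eq_zero fun j _ => contract_riemann_bianchi hasym₂ hbianchi (v j)
    (fun x y f => hY.apply_cons_cons y x _) fun x y f => (hY.cons x).apply_cons_update y f v j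

lemma contract_contract_eq_zero_of_ricci_identity (hG : ∀ a b, G a b = G b a)
    (hpair : ∀ a b c d, R a b c d = R c d a b) (hasym₁ : ∀ a b c d, R a b c d = -R b a c d)
    (hasym₂ : ∀ a b c d, R a b c d = -R a b d c)
    (hbianchi : ∀ a b c d, R a b c d + R b c a d + R c a b d = 0)
    {m : ℕ} {Y : (Fin (m + 2) → ι) → ℝ} (hY : IsAlt Y) {U : ι → ι → (Fin (m + 2) → ι) → ℝ}
    (hU : ∀ a b, IsAlt (U a b))
    (hricci : ∀ a b v, U a b v - U b a v =
      ∑ i, ∑ e, ∑ f, R a b (v i) e * G e f * Y (Function.update v i f))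
    (v : Fin m → ι) :
    contract G (fun a y => contract G fun b x => U a b (Fin.cons x (Fin.cons y v))) = 0 := by
  have hswap : ∀ a y b x, U a b (Fin.cons x (Fin.cons y v)) + U b a (Fin.cons y (Fin.cons x v)) =
      ∑ i, ∑ e, ∑ f, R a b ((Fin.cons x (Fin.cons y v) : Fin (m + 2) → ι) i) e * G e f *
        Y (Function.update (Fin.cons x (Fin.cons y v)) i f) := by
    intro a y b x
    rw [(hU b a).apply_cons_cons y x, ← hricci]
    ring
  have h := two_mul_contract_contract G fun a y b x => U a b (Fin.cons x (Fin.cons y v))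
  rw [funext₂ fun a y => congrArg (contract G) (funext₂ (hswap a y)),
    contract_contract_curvature_eq_zero hG hpair hasym₁ hasym₂ hbianchi hY v] at h
  linarith

end Curvature

theorem statement6_general {ι : Type*} [Fintype ι] [DecidableEq ι] {r : ℕ}
    (hdim : r + 2 < Fintype.card ι + 1)
    (g ginv : ι → ι → ℝ)
    (hgsymm : ∀ a b, g a b = g b a) (hginvsymm : ∀ a b, ginv a b = ginv b a)
    (hinv : ∀ a b, ∑ c, ginv a c * g c b = if a = b then (1 : ℝ) else 0)
    (Y : (Fin (r + 2) → ι) → ℝ) (hYalt : IsAlt Y)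
    (Dh : ι → (Fin (r + 1) → ι) → ℝ) (hDhalt : ∀ a, IsAlt (Dh a))
    (DDY : ι → ι → (Fin (r + 2) → ι) → ℝ)
    (Riem : ι → ι → ι → ι → ℝ)
    (hDCKY : ∀ (a b : ι) (v : Fin (r + 2) → ι),
      DDY a b v = alt (totalD (DDY a)) (Fin.cons b v) + 2 * ghAlt g (Dh a) b v)
    (hRicciId : ∀ (a b : ι) (v : Fin (r + 2) → ι),
      DDY a b v - DDY b a v
        = ∑ i : Fin (r + 2), ∑ e, ∑ f,
            Riem a b (v i) e * ginv e f * Y (Function.update v i f))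
    (hRiemAsym₁ : ∀ a b c d, Riem a b c d = -Riem b a c d)
    (hRiemAsym₂ : ∀ a b c d, Riem a b c d = -Riem a b d c)
    (hRiemPair : ∀ a b c d, Riem a b c d = Riem c d a b)
    (hBianchi : ∀ a b c d, Riem a b c d + Riem b c a d + Riem c a b d = 0) :
    ∀ v : Fin r → ι, ∑ a, ∑ b, ginv a b * Dh a (Fin.cons b v) = 0 := by
  intro v
  have hDDYalt : ∀ a b, IsAlt (DDY a b) := fun a b => by
    rw [funext (hDCKY a b)]
    exact ((alt_isAlt _).cons b).add ((alt_isAlt _).const_mul 2)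
  have htrace : ∀ a y, contract ginv (fun b x => DDY a b (Fin.cons x (Fin.cons y v))) =
      2 * (((Fintype.card ι : ℝ) - (r + 1 : ℕ)) / ((r + 1 : ℕ) + 1) * Dh a (Fin.cons y v)) :=
    fun a y => contract_of_cky_eq hgsymm hginvsymm hinv (hDhalt a) (hDCKY a) (Fin.cons y v)
  have hdouble := contract_contract_eq_zero_of_ricci_identity hginvsymm hRiemPair hRiemAsym₁
    hRiemAsym₂ hBianchi hYalt hDDYalt hRicciId v
  simp only [htrace, contract_const_mul] at hdouble
  have hcard : ((r + 1 : ℕ) : ℝ) < Fintype.card ι := by exact_mod_cast (by omega : r + 1 < _)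
  have hc : ((Fintype.card ι : ℝ) - (r + 1 : ℕ)) / ((r + 1 : ℕ) + 1) ≠ 0 := by
    apply div_ne_zero <;> [linarith; positivity]
  exact (mul_eq_zero.mp ((mul_eq_zero.mp hdouble).resolve_left two_ne_zero)).resolve_left hc

/-- Let `Y` be a conformal Killing–Yano tensor of order `p = r+2`
with associated tensor `h` on an `n`-dimensional pseudo-Riemannian manifold
(`p < n+1`), and let `h'_{a b₂…b_p} = ∇_a h_{b₂…b_p}` (denoted `Dh`).  Using the
covariant derivative `D = ∇Y`, the second derivative `DDY = ∇∇Y` subject to the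
differentiated CKY equation and the Ricci identity, and the symmetries and first
Bianchi identity of the Riemann tensor, `h'` is totally trace-free:
`g^{a b₂} h'_{a b₂ b₃…b_p} = 0`. -/
theorem statement6 {ι : Type*} [Fintype ι] [DecidableEq ι] {r : ℕ}
    (hdim : r + 2 < Fintype.card ι + 1)
    (g ginv : ι → ι → ℝ)
    (hgsymm : ∀ a b, g a b = g b a) (hginvsymm : ∀ a b, ginv a b = ginv b a)
    (hinv : ∀ a b, ∑ c, ginv a c * g c b = if a = b then (1 : ℝ) else 0)
    (Y : (Fin (r + 2) → ι) → ℝ) (hYalt : IsAlt Y)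
    (h : (Fin (r + 1) → ι) → ℝ) (hhalt : IsAlt h)
    (D : ι → (Fin (r + 2) → ι) → ℝ) (hDalt : ∀ a, IsAlt (D a))
    (Dh : ι → (Fin (r + 1) → ι) → ℝ) (hDhalt : ∀ a, IsAlt (Dh a))
    (DDY : ι → ι → (Fin (r + 2) → ι) → ℝ)
    (Riem : ι → ι → ι → ι → ℝ)
    (hCKY : ∀ (a : ι) (v : Fin (r + 2) → ι),
      D a v = alt (totalD D) (Fin.cons a v) + 2 * ghAlt g h a v)
    (hDCKY : ∀ (a b : ι) (v : Fin (r + 2) → ι),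
      DDY a b v = alt (totalD (DDY a)) (Fin.cons b v) + 2 * ghAlt g (Dh a) b v)
    (hRicciId : ∀ (a b : ι) (v : Fin (r + 2) → ι),
      DDY a b v - DDY b a v
        = ∑ i : Fin (r + 2), ∑ e, ∑ f,
            Riem a b (v i) e * ginv e f * Y (Function.update v i f))
    (hRiemAsym₁ : ∀ a b c d, Riem a b c d = -Riem b a c d)
    (hRiemAsym₂ : ∀ a b c d, Riem a b c d = -Riem a b d c)
    (hRiemPair : ∀ a b c d, Riem a b c d = Riem c d a b)
    (hBianchi : ∀ a b c d, Riem a b c d + Riem b c a d + Riem c a b d = 0) :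
    ∀ v : Fin r → ι, ∑ a, ∑ b, ginv a b * Dh a (Fin.cons b v) = 0 :=
  statement6_general hdim g ginv hgsymm hginvsymm hinv Y hYalt Dh hDhalt DDY Riem hDCKY hRicciId
    hRiemAsym₁ hRiemAsym₂ hRiemPair hBianchi
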